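/- Suppose for every t ∈ ℕ, R(t) = 3^{n-1} (1 - 6/(|V_n|+1))^{2t} and ||P^t_{id} - π||_TV ≥ 1 - 4/(4 + R(t)). If t < (|V_n|/12) log |V_n| - c|V_n| with c = log(10^6)/12 and n sufficiently large, then ||P^t_{id} - π||_TV ≥ 1/4, and hence t_mix ≥ (|V_n|/12) log |V_n| - c |V_n|. -/

import Mathlib

/-!
Writing `x = 6 / (N + 1)`, the bound `log (1 - x) ≥ -x - x²` gives
`(1 - x)^(2t) ≥ exp (-2t (x + x²))`. For `t < (N / 12) log N - c N` the linear term of the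
exponent is at most `log N - 12 c` and the quadratic one at most `1`, so
`R(t) ≥ 3^(n-1) e^(12c) / (e N) ≥ 10^6 / (5e) ≥ 4/3`, which is exactly what makes
`1 - 4 / (4 + R(t)) ≥ 1/4`. The bound on `t_mix` is the contrapositive.
-/

open Real

lemma exp_neg_add_sq_le_one_sub {x : ℝ} (h0 : 0 ≤ x) (h1 : x ≤ 1 / 2) :
    exp (-(x + x ^ 2)) ≤ 1 - x := by
  have hexp := quadratic_le_exp_of_nonneg (by positivity : 0 ≤ x + x ^ 2)
  have hcubic : 0 ≤ 1 - x - x ^ 2 - x ^ 3 := by nlinarith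
  rw [exp_neg, inv_le_iff_one_le_mul₀ (exp_pos _)]
  -- `(1 - x) (1 + y + y² / 2) - 1 = x² (1 - x - x² - x³) / 2` for `y = x + x²`
  nlinarith [mul_le_mul_of_nonneg_left hexp (by linarith : 0 ≤ 1 - x),
    mul_nonneg (sq_nonneg x) hcubic]

lemma exp_neg_mul_le_one_sub_pow {x : ℝ} (h0 : 0 ≤ x) (h1 : x ≤ 1 / 2) (k : ℕ) :
    exp (-(k * (x + x ^ 2))) ≤ (1 - x) ^ k := by
  rw [← mul_neg, exp_nat_mul]
  exact pow_le_pow_left₀ (exp_pos _).le (exp_neg_add_sq_le_one_sub h0 h1) k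

lemma six_mul_log_le_self {N : ℝ} (hN : 144 ≤ N) : 6 * log N ≤ N := by
  have hsqrt : 12 ≤ √N := by
    rw [show (12 : ℝ) = √144 by rw [show (144 : ℝ) = 12 ^ 2 by norm_num, sqrt_sq (by norm_num)]]
    exact sqrt_le_sqrt hN
  have hlog : log N ≤ 2 * (√N - 1) := by
    have h := log_le_sub_one_of_pos (by positivity : 0 < √N)
    rw [log_sqrt (by linarith)] at h
    linarith
  nlinarith [sq_sqrt (by linarith : 0 ≤ N)]

lemma two_mul_add_sq_le_log_sub {N c : ℝ} {t : ℕ} (hN : 144 ≤ N) (hc : 0 ≤ c)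
    (ht : t < N / 12 * log N - c * N) :
    2 * t * (6 / (N + 1) + (6 / (N + 1)) ^ 2) ≤ log N - 12 * c + 1 := by
  have hN1 : 0 < N + 1 := by linarith
  have hT : 12 * t ≤ N * (log N - 12 * c) := by linarith
  have hL : 0 < log N - 12 * c := by
    by_contra! h
    nlinarith [(Nat.cast_nonneg t : (0 : ℝ) ≤ t)]
  have hlin : 2 * t * (6 / (N + 1)) ≤ log N - 12 * c := by
    rw [show 2 * t * (6 / (N + 1)) = 12 * t / (N + 1) by ring, div_le_iff₀ hN1]
    nlinarith
  have hquad : 2 * t * (6 / (N + 1)) ^ 2 ≤ 1 := by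
    rw [show 2 * t * (6 / (N + 1)) ^ 2 = 72 * t / (N + 1) ^ 2 by rw [div_pow]; ring,
      div_le_one (by positivity)]
    nlinarith [six_mul_log_le_self hN]
  linarith

lemma exp_div_le_one_sub_pow {N c : ℝ} {t : ℕ} (hN : 144 ≤ N) (hc : 0 ≤ c)
    (ht : t < N / 12 * log N - c * N) :
    exp (12 * c - 1) / N ≤ (1 - 6 / (N + 1)) ^ (2 * t) := by
  have hx : 6 / (N + 1) ≤ 1 / 2 := by rw [div_le_iff₀ (by linarith)]; linarith
  calc exp (12 * c - 1) / N = exp (-(log N - 12 * c + 1)) := by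
        rw [show -(log N - 12 * c + 1) = (12 * c - 1) - log N by ring, exp_sub _ (log N),
          exp_log (by linarith)]
    _ ≤ exp (-((2 * t : ℕ) * (6 / (N + 1) + (6 / (N + 1)) ^ 2))) := by
        gcongr
        push_cast
        exact two_mul_add_sq_le_log_sub hN hc ht
    _ ≤ (1 - 6 / (N + 1)) ^ (2 * t) := exp_neg_mul_le_one_sub_pow (by positivity) hx _

lemma quarter_le_one_sub_four_div {R : ℝ} (hR : 4 / 3 ≤ R) : 1 / 4 ≤ 1 - 4 / (4 + R) := by
  have h : 4 / (4 + R) ≤ 3 / 4 := by rw [div_le_iff₀ (by linarith)]; linarith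
  linarith

lemma gasket_card_bounds {n : ℕ} (hn : 5 ≤ n) :
    144 ≤ (3 : ℝ) / 2 * (3 ^ n + 1) ∧ (3 : ℝ) / 2 * (3 ^ n + 1) ≤ 5 * 3 ^ (n - 1) := by
  obtain ⟨m, rfl⟩ : ∃ m, n = m + 5 := ⟨n - 5, by omega⟩
  have h : (1 : ℝ) ≤ 3 ^ m := one_le_pow₀ (by norm_num)
  constructor
  · rw [pow_add]; nlinarith
  · rw [show m + 5 - 1 = m + 4 by omega, pow_succ, pow_add]; nlinarith

/-- Mixing-time lower bound for the sandpile chain on `G_n`: if the total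
variation distance `d t` from stationarity satisfies
`d t ≥ 1 - 4/(4 + R(t))` with `R(t) = 3^{n-1}(1 - 6/(|V_n|+1))^{2t}`, then for
`n` sufficiently large and `t < (|V_n|/12) log |V_n| - c|V_n|` with
`c = log(10^6)/12` one has `d t ≥ 1/4`; hence
`t_mix ≥ (|V_n|/12) log |V_n| - c|V_n|`. -/
theorem gasket_mixing_lower_bound :
    ∃ n₀ : ℕ, ∀ n : ℕ, n₀ ≤ n → ∀ d : ℕ → ℝ,
      (∀ t : ℕ, d t ≥ 1 - 4 / (4 + (3 : ℝ) ^ (n - 1) *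
          (1 - 6 / ((3 : ℝ) / 2 * (3 ^ n + 1) + 1)) ^ (2 * t))) →
      (∀ t : ℕ, (t : ℝ) <
          ((3 : ℝ) / 2 * (3 ^ n + 1)) / 12 * Real.log ((3 : ℝ) / 2 * (3 ^ n + 1))
            - (Real.log (10 ^ 6) / 12) * ((3 : ℝ) / 2 * (3 ^ n + 1)) →
        d t ≥ 1 / 4) ∧
      (∀ tm : ℕ, d tm < 1 / 4 →
        ((3 : ℝ) / 2 * (3 ^ n + 1)) / 12 * Real.log ((3 : ℝ) / 2 * (3 ^ n + 1))
            - (Real.log (10 ^ 6) / 12) * ((3 : ℝ) / 2 * (3 ^ n + 1)) ≤ tm) := by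
  refine ⟨5, fun n hn d hd => ?_⟩
  obtain ⟨hN, hNle⟩ := gasket_card_bounds hn
  set N : ℝ := 3 / 2 * (3 ^ n + 1)
  have hc : 0 ≤ log (10 ^ 6) / 12 := by positivity
  have hR : ∀ t : ℕ, (t : ℝ) < N / 12 * log N - log (10 ^ 6) / 12 * N →
      4 / 3 ≤ (3 : ℝ) ^ (n - 1) * (1 - 6 / (N + 1)) ^ (2 * t) := by
    intro t ht
    have hpow := exp_div_le_one_sub_pow hN hc ht
    rw [show 12 * (log (10 ^ 6) / 12) - 1 = log (10 ^ 6) - 1 by ring, exp_sub,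
      exp_log (by norm_num)] at hpow
    calc (4 : ℝ) / 3 ≤ 3 ^ (n - 1) * (10 ^ 6 / exp 1 / N) := by
          rw [div_div, mul_div_assoc', le_div_iff₀ (by positivity)]
          nlinarith [exp_one_lt_d9, exp_pos 1]
      _ ≤ _ := by gcongr
  have hquarter : ∀ t : ℕ, (t : ℝ) < N / 12 * log N - log (10 ^ 6) / 12 * N → d t ≥ 1 / 4 :=
    fun t ht => (quarter_le_one_sub_four_div (hR t ht)).trans (hd t)
  exact ⟨hquarter, fun tm h => not_lt.1 fun ht => h.not_ge (hquarter tm ht)⟩
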